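/- For every polynomial D in Z[x_1,...,x_p] there exist n ≥ p and a finite system S of equations, each of one of the forms x_i = 1, x_i + x_j = x_k, or x_i · x_j = x_k with i, j, k in {1,...,n}, such that for every commutative ring K extending Z and all x_1,...,x_p in K: D(x_1,...,x_p) = 0 if and only if there exist x_{p+1},...,x_n in K such that (x_1,...,x_n) solves S; moreover such x_{p+1},...,x_n, when they exist, are unique. -/

import Mathlib

/-!
Write `D` with `+`, `*`, `-`, the variables and `1`, and give every intermediate value a fresh
unknown. Each new unknown is then pinned down by one equation in the earlier ones (`w = a - b` is
encoded as `w + b = a`, and `w = 0` as `w + w = w`), so every assignment of `x_1, ..., x_p` extends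
uniquely to a solution, in which the unknown `x_k` computing `D` equals `D(x)`. Adding the
equation `x_k + x_k = x_k` then imposes `D(x) = 0`.
-/

/-- An equation from the set `E_n`: `x_i = 1`, `x_i + x_j = x_k`, or `x_i * x_j = x_k`
with indices in `{1, ..., n}` (here `Fin n`). -/
inductive Eqn (n : ℕ) where
  | one (i : Fin n)
  | add (i j k : Fin n)
  | mul (i j k : Fin n)

/-- The equation holds for an assignment `x` of values in a commutative semiring. -/
def Eqn.Holds {n : ℕ} {K : Type*} [CommSemiring K] (x : Fin n → K) : Eqn n → Prop
  | .one i => x i = 1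
  | .add i j k => x i + x j = x k
  | .mul i j k => x i * x j = x k

open MvPolynomial

namespace Eqn

def castLE {m n : ℕ} (h : m ≤ n) : Eqn m → Eqn n
  | .one i => .one (Fin.castLE h i)
  | .add i j k => .add (Fin.castLE h i) (Fin.castLE h j) (Fin.castLE h k)
  | .mul i j k => .mul (Fin.castLE h i) (Fin.castLE h j) (Fin.castLE h k)

def Solves {n : ℕ} {K : Type*} [CommSemiring K] (S : List (Eqn n)) (y : Fin n → K) : Prop :=
  ∀ e ∈ S, e.Holds y

variable {K : Type*} [CommSemiring K] {m n : ℕ}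

theorem holds_castLE (h : m ≤ n) (y : Fin n → K) (e : Eqn m) :
    (e.castLE h).Holds y ↔ e.Holds (y ∘ Fin.castLE h) := by
  cases e <;> rfl

@[simp] theorem solves_nil (y : Fin n → K) : Solves [] y := by
  simp [Solves]

@[simp] theorem solves_singleton (e : Eqn n) (y : Fin n → K) : Solves [e] y ↔ e.Holds y := by
  simp [Solves]

@[simp] theorem solves_append (S T : List (Eqn n)) (y : Fin n → K) :
    Solves (S ++ T) y ↔ Solves S y ∧ Solves T y :=
  List.forall_mem_append

@[simp] theorem solves_map_castLE (h : m ≤ n) (S : List (Eqn m)) (y : Fin n → K) :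
    Solves (S.map (Eqn.castLE h)) y ↔ Solves S (y ∘ Fin.castLE h) := by
  simp [Solves, holds_castLE]

end Eqn

open Eqn

def Determines {n m : ℕ} (h : n ≤ m) (S : List (Eqn m)) : Prop :=
  ∀ (K : Type) [CommRing K] (v : Fin n → K), ∃! y : Fin m → K, y ∘ Fin.castLE h = v ∧ Solves S y

theorem determines_nil (n : ℕ) : Determines le_rfl ([] : List (Eqn n)) := by
  intro K _ v
  refine ⟨v, by simp [Fin.castLE_rfl], fun y hy => ?_⟩
  simpa [Fin.castLE_rfl] using hy.1

theorem determines_singleton {m : ℕ} (e : Eqn (m + 1))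
    (he : ∀ (K : Type) [CommRing K] (y : Fin m → K), ∃! w : K, e.Holds (Fin.snoc y w)) :
    Determines (Nat.le_succ m) [e] := by
  intro K _ v
  obtain ⟨w, hw, hw_uniq⟩ := he K v
  refine ⟨Fin.snoc v w, ⟨Fin.init_snoc (α := fun _ => K) w v, by simpa using hw⟩,
    fun y ⟨hyv, hy⟩ => ?_⟩
  have hy_init : Fin.init y = v := hyv
  rw [← Fin.snoc_init_self y, hy_init, hw_uniq (y (Fin.last m))]
  rwa [solves_singleton, ← Fin.snoc_init_self y, hy_init] at hy

theorem Determines.append {n m l : ℕ} {h₁ : n ≤ m} {h₂ : m ≤ l} {S₁ : List (Eqn m)}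
    {S₂ : List (Eqn l)} (hS₁ : Determines h₁ S₁) (hS₂ : Determines h₂ S₂) :
    Determines (h₁.trans h₂) (S₁.map (Eqn.castLE h₂) ++ S₂) := by
  intro K _ v
  obtain ⟨y₁, ⟨hy₁v, hy₁⟩, hy₁_uniq⟩ := hS₁ K v
  obtain ⟨y₂, ⟨hy₂y₁, hy₂⟩, hy₂_uniq⟩ := hS₂ K y₁
  have hcomp (y : Fin l → K) :
      y ∘ Fin.castLE (h₁.trans h₂) = (y ∘ Fin.castLE h₂) ∘ Fin.castLE h₁ := by
    rw [Function.comp_assoc, Fin.castLE_comp_castLE]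
  refine ⟨y₂, ⟨by rw [hcomp, hy₂y₁, hy₁v], by simp [hy₂y₁, hy₁, hy₂]⟩,
    fun y ⟨hyv, hy⟩ => ?_⟩
  rw [solves_append, solves_map_castLE] at hy
  exact hy₂_uniq y ⟨hy₁_uniq _ ⟨by rw [← hcomp, hyv], hy.1⟩, hy.2⟩

/-- Quantifying over the number `n ≥ p` of free unknowns lets these systems be stacked: the
system for `r` in `q + r` is built on top of the one for `q`. -/
def Representable {p : ℕ} (q : MvPolynomial (Fin p) ℤ) : Prop :=
  ∀ (n : ℕ) (hp : p ≤ n), ∃ (m : ℕ) (h : n ≤ m) (S : List (Eqn m)) (k : Fin m),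
    Determines h S ∧ ∀ (K : Type) [CommRing K] (y : Fin m → K),
      Solves S y → y k = aeval (y ∘ Fin.castLE (hp.trans h)) q

namespace Representable

variable {p : ℕ}

theorem X (i : Fin p) : Representable (X i : MvPolynomial (Fin p) ℤ) := fun n hp =>
  ⟨n, le_rfl, [], Fin.castLE hp i, determines_nil n, fun K _ y _ => by simp⟩

theorem C_of_eqn (c : ℤ) (e : ∀ m, Eqn (m + 1))
    (he : ∀ (K : Type) [CommRing K] (m : ℕ) (y : Fin (m + 1) → K),
      (e m).Holds y ↔ y (Fin.last m) = c) :
    Representable (C c : MvPolynomial (Fin p) ℤ) := fun n _ =>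
  ⟨n + 1, Nat.le_succ n, [e n], Fin.last n,
    determines_singleton _ fun K _ y => ⟨c, by simp [he], fun w hw => by simpa [he] using hw⟩,
    fun K _ y hy => by simpa [he] using hy⟩

theorem one : Representable (1 : MvPolynomial (Fin p) ℤ) :=
  C_of_eqn 1 (fun m => .one (Fin.last m)) fun _ _ _ _ => by simp [Holds]

theorem zero : Representable (0 : MvPolynomial (Fin p) ℤ) := by
  simpa using C_of_eqn (p := p) 0 (fun m => .add (Fin.last m) (Fin.last m) (Fin.last m))
    fun _ _ _ _ => by simp [Holds]

theorem binop {q r s : MvPolynomial (Fin p) ℤ} (hq : Representable q) (hr : Representable r)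
    (op : ∀ {K : Type} [CommRing K], K → K → K)
    (hs : ∀ (K : Type) [CommRing K] (x : Fin p → K), aeval x s = op (aeval x q) (aeval x r))
    (e : ∀ {m}, Fin m → Fin m → Eqn (m + 1))
    (he : ∀ (K : Type) [CommRing K] (m : ℕ) (a b : Fin m) (y : Fin (m + 1) → K),
      (e a b).Holds y ↔ y (Fin.last m) = op (y a.castSucc) (y b.castSucc)) :
    Representable s := by
  intro n hp
  obtain ⟨m₁, h₁, S₁, a, hS₁, ha⟩ := hq n hp
  obtain ⟨m₂, h₂, S₂, b, hS₂, hb⟩ := hr m₁ (hp.trans h₁)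
  have hsingle : Determines (Nat.le_succ m₂) [e (Fin.castLE h₂ a) b] :=
    determines_singleton _ fun K _ y =>
      ⟨op (y (Fin.castLE h₂ a)) (y b), by simp only [he, Fin.snoc_castSucc, Fin.snoc_last],
        fun w hw => by simpa only [he, Fin.snoc_castSucc, Fin.snoc_last] using hw⟩
  refine ⟨m₂ + 1, _, _, Fin.last m₂, (hS₁.append hS₂).append hsingle, fun K _ y hy => ?_⟩
  simp only [solves_append, solves_map_castLE, solves_singleton, he] at hy
  obtain ⟨⟨hy₁, hy₂⟩, hy⟩ := hy
  rw [hy, hs]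
  have ha' := ha K _ hy₁
  have hb' := hb K _ hy₂
  simp only [Function.comp_assoc, Fin.castLE_comp_castLE] at ha' hb'
  exact congrArg₂ op ha' hb'

theorem add {q r : MvPolynomial (Fin p) ℤ} (hq : Representable q) (hr : Representable r) :
    Representable (q + r) :=
  hq.binop hr (· + ·) (fun _ _ _ => map_add ..)
    (fun a b => .add a.castSucc b.castSucc (Fin.last _)) fun _ _ _ _ _ _ => eq_comm

theorem mul {q r : MvPolynomial (Fin p) ℤ} (hq : Representable q) (hr : Representable r) :
    Representable (q * r) :=
  hq.binop hr (· * ·) (fun _ _ _ => map_mul ..)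
    (fun a b => .mul a.castSucc b.castSucc (Fin.last _)) fun _ _ _ _ _ _ => eq_comm

theorem sub {q r : MvPolynomial (Fin p) ℤ} (hq : Representable q) (hr : Representable r) :
    Representable (q - r) :=
  hq.binop hr (· - ·) (fun _ _ _ => map_sub ..)
    (fun a b => .add (Fin.last _) b.castSucc a.castSucc) fun _ _ _ _ _ _ => eq_sub_iff_add_eq.symm

end Representable

theorem representable {p : ℕ} (q : MvPolynomial (Fin p) ℤ) : Representable q := by
  induction q using MvPolynomial.induction_on with
  | C c =>
    induction c using Int.induction_on with
    | zero => simpa using Representable.zero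
    | succ c hc => simpa using hc.add Representable.one
    | pred c hc => simpa using hc.sub Representable.one
  | add q r hq hr => exact hq.add hr
  | mul_X q i hq => exact hq.mul (Representable.X i)

theorem stmt_8 (p : ℕ) (D : MvPolynomial (Fin p) ℤ) :
    ∃ (n : ℕ) (hpn : p ≤ n) (S : List (Eqn n)),
      ∀ (K : Type) [CommRing K] [CharZero K] (x : Fin p → K),
        (MvPolynomial.aeval x D = 0 ↔
          ∃ y : Fin n → K, (∀ i : Fin p, y (Fin.castLE hpn i) = x i) ∧
            ∀ e ∈ S, e.Holds y) ∧
        ∀ y z : Fin n → K,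
          ((∀ i : Fin p, y (Fin.castLE hpn i) = x i) ∧ ∀ e ∈ S, e.Holds y) →
          ((∀ i : Fin p, z (Fin.castLE hpn i) = x i) ∧ ∀ e ∈ S, e.Holds z) →
          y = z := by
  obtain ⟨n, hpn, S, k, hS, hk⟩ := representable D p le_rfl
  refine ⟨n, hpn, S ++ [.add k k k], fun K _ _ x => ?_⟩
  have hsolves (y : Fin n → K) (hy : ∀ i, y (Fin.castLE hpn i) = x i) :
      Solves (S ++ [.add k k k]) y ↔ Solves S y ∧ aeval x D = 0 := by
    rw [solves_append, solves_singleton, Holds, add_eq_right]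
    exact and_congr_right fun hyS => by
      rw [hk K y hyS, show y ∘ Fin.castLE _ = x from funext hy]
  refine ⟨⟨fun hD => ?_, fun ⟨y, hyx, hy⟩ => ((hsolves y hyx).1 hy).2⟩,
    fun y z ⟨hyx, hy⟩ ⟨hzx, hz⟩ => (hS K x).unique ⟨funext hyx, ((hsolves y hyx).1 hy).1⟩
      ⟨funext hzx, ((hsolves z hzx).1 hz).1⟩⟩
  obtain ⟨y, ⟨hyx, hy⟩, -⟩ := hS K x
  exact ⟨y, congrFun hyx, (hsolves y (congrFun hyx)).2 ⟨hy, hD⟩⟩
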